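/- Let κ : [0,∞) → [0,∞) be continuous and self-gravitating (κ(x) < κ̄(x) for all x > 0, where κ̄(x) = (2/x²)∫₀ˣ κ(t)·t dt), and define α(x) = (2/x)∫₀ˣ κ(t)·t dt. Then there is at most one x > 0 with α(x) = x; that is, a single-plane gravitational lens produces at most one Einstein ring. -/

import Mathlib

/-!
The Einstein rings are exactly the radii where the mean surface density `κ̄` equals `1`,
since `α x = x κ̄ x`. Differentiating `κ̄ x = 2 F x / x²`, where `F x = ∫₀ˣ κ t t dt` has
`F' x = κ x x`, gives
`κ̄' x = (2 / x) (κ x - κ̄ x)`, which is negative for a self-gravitating lens, so `κ̄` is strictly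
decreasing on `(0, ∞)` and takes the value `1` at most once.
-/

open Set intervalIntegral

noncomputable section

namespace GravitationalLens

def meanDensity (κ : ℝ → ℝ) (x : ℝ) : ℝ :=
  2 / x ^ 2 * ∫ t in (0 : ℝ)..x, κ t * t

variable {κ : ℝ → ℝ}

theorem hasDerivAt_integral_mul_id (hκ : ContinuousOn κ (Ici 0)) {x : ℝ} (hx : 0 < x) :
    HasDerivAt (fun y => ∫ t in (0 : ℝ)..y, κ t * t) (κ x * x) x := by
  have hint : IntervalIntegrable (fun t => κ t * t) MeasureTheory.volume 0 x :=
    ((hκ.mono (by simp [uIcc_of_le hx.le, Icc_subset_Ici_self])).mul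
      continuousOn_id).intervalIntegrable
  have hmeas : StronglyMeasurableAtFilter (fun t => κ t * t) (nhds x) :=
    ((hκ.mono (Ioi_subset_Ici le_rfl)).mul continuousOn_id).stronglyMeasurableAtFilter
      isOpen_Ioi x hx
  exact integral_hasDerivAt_right hint hmeas
    ((hκ.continuousAt (Ici_mem_nhds hx)).mul continuousAt_id)

theorem hasDerivAt_meanDensity (hκ : ContinuousOn κ (Ici 0)) {x : ℝ} (hx : 0 < x) :
    HasDerivAt (meanDensity κ) (2 / x * (κ x - meanDensity κ x)) x := by
  have h := ((hasDerivAt_integral_mul_id hκ hx).const_mul 2).div (hasDerivAt_pow 2 x)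
    (pow_ne_zero 2 hx.ne')
  have hfun : ((fun y => 2 * ∫ t in (0 : ℝ)..y, κ t * t) / fun y => y ^ 2) = meanDensity κ := by
    funext y
    simp only [Pi.div_apply, meanDensity]
    ring
  rw [hfun] at h
  refine h.congr_deriv ?_
  simp only [meanDensity]
  field_simp
  ring

theorem strictAntiOn_meanDensity (hκ : ContinuousOn κ (Ici 0))
    (hself : ∀ x, 0 < x → κ x < meanDensity κ x) :
    StrictAntiOn (meanDensity κ) (Ioi 0) := by
  refine strictAntiOn_of_hasDerivWithinAt_neg (convex_Ioi 0)
    (fun x hx => (hasDerivAt_meanDensity hκ hx).continuousAt.continuousWithinAt)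
    (fun x hx => (hasDerivAt_meanDensity hκ (interior_subset hx)).hasDerivWithinAt)
    fun x hx => ?_
  rw [interior_Ioi] at hx
  exact mul_neg_of_pos_of_neg (div_pos two_pos hx) (sub_neg.mpr (hself x hx))

theorem mul_meanDensity {x : ℝ} (hx : x ≠ 0) :
    x * meanDensity κ x = 2 / x * ∫ t in (0 : ℝ)..x, κ t * t := by
  rw [meanDensity]
  field_simp

end GravitationalLens

open GravitationalLens in
theorem einstein_ring_unique_general
    (κ : ℝ → ℝ) (α : ℝ → ℝ)
    (hcont : ContinuousOn κ (Set.Ici 0))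
    (hself : ∀ x : ℝ, 0 < x →
      κ x < (2 / x ^ 2) * ∫ t in (0 : ℝ)..x, κ t * t)
    (hα : ∀ x : ℝ, 0 < x → α x = (2 / x) * ∫ t in (0 : ℝ)..x, κ t * t) :
    ∀ x₁ x₂ : ℝ, 0 < x₁ → 0 < x₂ → α x₁ = x₁ → α x₂ = x₂ → x₁ = x₂ := by
  intro x₁ x₂ h₁ h₂ he₁ he₂
  have hring : ∀ x, 0 < x → α x = x → meanDensity κ x = 1 := fun x hx he => by
    rwa [hα x hx, ← mul_meanDensity hx.ne', mul_eq_left₀ hx.ne'] at he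
  exact (strictAntiOn_meanDensity hcont hself).injOn h₁ h₂
    (by rw [hring x₁ h₁ he₁, hring x₂ h₂ he₂])

/-- **Uniqueness.** For a continuous, self-gravitating
`κ : [0,∞) → [0,∞)` and the normalized deflection angle
`α x = (2/x) ∫₀ˣ κ t · t dt`, there is at most one `x > 0` with `α x = x`:
a single-plane gravitational lens produces at most one Einstein ring. -/
theorem einstein_ring_unique
    (κ : ℝ → ℝ) (α : ℝ → ℝ)
    (hcont : ContinuousOn κ (Set.Ici 0))
    (hnonneg : ∀ x ∈ Set.Ici (0 : ℝ), 0 ≤ κ x)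
    (hself : ∀ x : ℝ, 0 < x →
      κ x < (2 / x ^ 2) * ∫ t in (0 : ℝ)..x, κ t * t)
    (hα : ∀ x : ℝ, 0 < x → α x = (2 / x) * ∫ t in (0 : ℝ)..x, κ t * t) :
    ∀ x₁ x₂ : ℝ, 0 < x₁ → 0 < x₂ → α x₁ = x₁ → α x₂ = x₂ → x₁ = x₂ :=
  einstein_ring_unique_general κ α hcont hself hα
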